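/- arXiv:1409.1906 — 4 statements merged into one kernel-verified Lean document; each statement's English description precedes it below -/
import Mathlib

section
/- Let ξ : [0,∞) → ℝ be continuous with ξ(0) = 0, and suppose there exist constants 0 ≤ α ≤ β < 1 and γ > 0 such that ∫ₐʳ (α − ξ(s))/s ds ≤ γ and ∫ₐʳ (ξ(s) − β)/s ds ≤ γ for all 0 < a < r. Define h(r) = C·exp(-∫₀ʳ ξ(s)/s ds) with C > 0 and h_k(r) = (1/k)·h(r/k) for k ≥ 1. Then for all k ≥ 1 and r > 0: e^{-γ}·k^{α−1} ≤ h_k(r)/h(r) ≤ e^{γ}·k^{β−1}. -/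
/-!
Writing `h = C exp(-∫₀ʳ ξ s / s)`, the ratio `h_k r / h r` equals `k⁻¹ exp (∫_{r/k}^r ξ s / s)`.
Since `∫_{r/k}^r ds / s = log k`, condition (c1) on `[r/k, r]` says exactly that this integral lies
between `α log k - γ` and `β log k + γ`, and exponentiating gives the two bounds.
-/

open MeasureTheory intervalIntegral Real

section LogIntegral

variable {f : ℝ → ℝ} {a b : ℝ}

lemma intervalIntegrable_inv_of_pos (ha : 0 < a) (hb : 0 < b) :
    IntervalIntegrable (fun s : ℝ => s⁻¹) volume a b :=
  intervalIntegrable_inv_iff.2 <| Or.inr fun h0 =>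
    (Set.mem_uIcc.1 h0).elim (fun h => h.1.not_gt ha) (fun h => h.1.not_gt hb)

lemma integral_sub_const_div_self (ha : 0 < a) (hb : 0 < b)
    (hf : IntervalIntegrable (fun s => f s / s) volume a b) (c : ℝ) :
    ∫ s in a..b, (f s - c) / s = (∫ s in a..b, f s / s) - c * log (b / a) := by
  simp only [sub_div, div_eq_mul_inv c]
  rw [integral_sub hf ((intervalIntegrable_inv_of_pos ha hb).const_mul c), intervalIntegral.integral_const_mul,
    integral_inv_of_pos ha hb]

lemma integral_const_sub_div_self (ha : 0 < a) (hb : 0 < b)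
    (hf : IntervalIntegrable (fun s => f s / s) volume a b) (c : ℝ) :
    ∫ s in a..b, (c - f s) / s = c * log (b / a) - ∫ s in a..b, f s / s := by
  have hneg : (fun s => (c - f s) / s) = fun s => -((f s - c) / s) := by
    funext s
    ring
  rw [hneg, intervalIntegral.integral_neg, integral_sub_const_div_self ha hb hf]
  ring

lemma integral_div_self_mem_Icc {α β γ : ℝ} (hγ : 0 ≤ γ)
    (hα : ∀ a r : ℝ, 0 < a → a < r → (∫ s in a..r, (α - f s) / s) ≤ γ)
    (hβ : ∀ a r : ℝ, 0 < a → a < r → (∫ s in a..r, (f s - β) / s) ≤ γ)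
    (ha : 0 < a) (hab : a ≤ b) (hf : IntervalIntegrable (fun s => f s / s) volume a b) :
    α * log (b / a) - γ ≤ ∫ s in a..b, f s / s ∧ ∫ s in a..b, f s / s ≤ β * log (b / a) + γ := by
  rcases hab.eq_or_lt with rfl | hlt
  · simp [hγ]
  have hb := ha.trans hlt
  have hlower := hα a b ha hlt
  have hupper := hβ a b ha hlt
  rw [integral_const_sub_div_self ha hb hf] at hlower
  rw [integral_sub_const_div_self ha hb hf] at hupper
  constructor <;> linarith

end LogIntegral

lemma exp_neg_integral_div_exp_neg_integral {g : ℝ → ℝ} {a b : ℝ}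
    (ha : IntervalIntegrable g volume 0 a) (hb : IntervalIntegrable g volume 0 b) :
    exp (-∫ s in (0:ℝ)..a, g s) / exp (-∫ s in (0:ℝ)..b, g s) = exp (∫ s in a..b, g s) := by
  rw [← exp_sub, ← integral_interval_sub_left hb ha]
  ring_nf

lemma exp_mul_rpow_sub_one {k : ℝ} (hk : 0 < k) (c p : ℝ) :
    exp c * k ^ (p - 1) = k⁻¹ * exp (c + p * log k) := by
  rw [rpow_def_of_pos hk, ← exp_log (inv_pos.2 hk), log_inv, ← exp_add, ← exp_add]
  ring_nf

theorem stmt_1_general (ξ : ℝ → ℝ)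
    (hint : ∀ r > (0:ℝ), IntervalIntegrable (fun s => ξ s / s) volume 0 r)
    (α β γ : ℝ) (hγ : 0 < γ)
    (hc1a : ∀ a r : ℝ, 0 < a → a < r → (∫ s in a..r, (α - ξ s) / s) ≤ γ)
    (hc1b : ∀ a r : ℝ, 0 < a → a < r → (∫ s in a..r, (ξ s - β) / s) ≤ γ)
    (C : ℝ) (hC : 0 < C)
    (h : ℝ → ℝ) (hh : ∀ r, h r = C * Real.exp (-∫ s in (0:ℝ)..r, ξ s / s))
    (hk : ℝ → ℝ → ℝ) (hhk : ∀ k r, hk k r = (1 / k) * h (r / k)) :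
    ∀ k : ℝ, 1 ≤ k → ∀ r > (0:ℝ),
      Real.exp (-γ) * k ^ (α - 1) ≤ hk k r / h r ∧
      hk k r / h r ≤ Real.exp γ * k ^ (β - 1) := by
  intro k hk1 r hr
  have hk0 : 0 < k := one_pos.trans_le hk1
  have hrk : 0 < r / k := div_pos hr hk0
  have hint_rk := hint _ hrk
  have hint_r := hint r hr
  have hratio : hk k r / h r = k⁻¹ * exp (∫ s in (r / k)..r, ξ s / s) := by
    rw [hhk, hh, hh, mul_div_assoc, mul_div_mul_left _ _ hC.ne',
      exp_neg_integral_div_exp_neg_integral hint_rk hint_r, one_div]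
  obtain ⟨hlower, hupper⟩ := integral_div_self_mem_Icc hγ.le hc1a hc1b hrk
    (div_le_self hr.le hk1) (hint_rk.symm.trans hint_r)
  rw [div_div_cancel₀ hr.ne'] at hlower hupper
  rw [hratio, exp_mul_rpow_sub_one hk0, exp_mul_rpow_sub_one hk0]
  constructor <;> gcongr <;> linarith

/-- under condition (c1), the rescaled profiles `h_k` are comparable to `h`. -/
theorem stmt_1 (ξ : ℝ → ℝ) (hξc : Continuous ξ) (hξ0 : ξ 0 = 0)
    (hint : ∀ r > (0:ℝ), IntervalIntegrable (fun s => ξ s / s) volume 0 r)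
    (α β γ : ℝ) (hα : 0 ≤ α) (hαβ : α ≤ β) (hβ : β < 1) (hγ : 0 < γ)
    (hc1a : ∀ a r : ℝ, 0 < a → a < r → (∫ s in a..r, (α - ξ s) / s) ≤ γ)
    (hc1b : ∀ a r : ℝ, 0 < a → a < r → (∫ s in a..r, (ξ s - β) / s) ≤ γ)
    (C : ℝ) (hC : 0 < C)
    (h : ℝ → ℝ) (hh : ∀ r, h r = C * Real.exp (-∫ s in (0:ℝ)..r, ξ s / s))
    (hk : ℝ → ℝ → ℝ) (hhk : ∀ k r, hk k r = (1 / k) * h (r / k)) :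
    ∀ k : ℝ, 1 ≤ k → ∀ r > (0:ℝ),
      Real.exp (-γ) * k ^ (α - 1) ≤ hk k r / h r ∧
      hk k r / h r ≤ Real.exp γ * k ^ (β - 1) :=
  stmt_1_general ξ hint α β γ hγ hc1a hc1b C hC h hh hk hhk
end

section
/- Let ξ : [0,∞) → [0,1] be continuous with ξ(0) = 0 and let h(r) = exp(-∫₀ʳ ξ(s)/s ds). Suppose ξ is nondecreasing and ξ(r₀) > 1 for some r₀ > 0. Then ∫₀^∞ √(h(s))/√s ds < ∞ (i.e., the associated U(n)-invariant metric is incomplete). -/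
open MeasureTheory intervalIntegral

/-- if the nondecreasing generating function exceeds 1 somewhere, the
associated `U(n)`-invariant metric is incomplete. -/
theorem stmt_5 (ξ : ℝ → ℝ) (hξc : Continuous ξ) (hξ0 : ξ 0 = 0) (hmono : Monotone ξ)
    (hint : ∀ r > (0:ℝ), IntervalIntegrable (fun s => ξ s / s) volume 0 r)
    (r₀ : ℝ) (hr₀ : 0 < r₀) (hξr₀ : 1 < ξ r₀)
    (h : ℝ → ℝ) (hh : ∀ r, h r = Real.exp (-∫ s in (0:ℝ)..r, ξ s / s)) :
    IntegrableOn (fun s => Real.sqrt (h s) / Real.sqrt s) (Set.Ioi (0:ℝ)) volume := by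
  set a := ξ r₀ with ha
  set F : ℝ → ℝ := fun r => ∫ s in (0:ℝ)..r, ξ s / s with hF
  set g : ℝ → ℝ := fun s => Real.sqrt (h s) / Real.sqrt s with hg
  have hξnn : ∀ s, 0 ≤ s → 0 ≤ ξ s := fun s hs => hξ0 ▸ hmono hs
  -- nonnegativity of the primitive
  have hFnn : ∀ r, 0 ≤ r → 0 ≤ F r := by
    intro r hr
    rcases eq_or_lt_of_le hr with rfl | hr
    · simp [hF]
    · exact intervalIntegral.integral_nonneg hr.le (fun u hu =>
        div_nonneg (hξnn u hu.1) hu.1)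
  -- continuity of F on `Ici 0`
  have hFcont : ContinuousOn F (Set.Ici 0) := by
    intro x hx
    have hx0 : (0:ℝ) ≤ x := hx
    have h1 : ContinuousWithinAt F (Set.Icc 0 (x + 1)) x := by
      apply intervalIntegral.continuousWithinAt_primitive (measure_singleton _)
      have := hint (x + 1) (by linarith)
      simpa [min_self, max_eq_right (by linarith : (0:ℝ) ≤ x + 1)] using this
    apply h1.mono_of_mem_nhdsWithin
    have heq : Set.Icc 0 (x + 1) = Set.Ici 0 ∩ Set.Iic (x + 1) := (Set.Ici_inter_Iic).symm
    rw [heq]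
    exact Filter.inter_mem self_mem_nhdsWithin
      (mem_nhdsWithin_of_mem_nhds (Iic_mem_nhds (by linarith)))
  -- continuity of g on `Ioi 0`
  have hgcont : ContinuousOn g (Set.Ioi 0) := by
    apply ContinuousOn.div
    · apply ContinuousOn.sqrt
      have : ContinuousOn (fun r => Real.exp (-F r)) (Set.Ioi 0) :=
        ((hFcont.mono (Set.Ioi_subset_Ici le_rfl)).neg).rexp
      refine (this.congr fun r _ => ?_)
      simp [hh r, hF]
    · exact Real.continuous_sqrt.continuousOn
    · intro x hx
      exact Real.sqrt_ne_zero'.2 hx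
  have hgnn : ∀ s, 0 ≤ g s := fun s =>
    div_nonneg (Real.sqrt_nonneg _) (Real.sqrt_nonneg _)
  -- √(h s) = exp (-(F s)/2)
  have hsqrt : ∀ s, Real.sqrt (h s) = Real.exp (-(F s) / 2) := by
    intro s
    rw [hh s,
      show Real.exp (-F s) = Real.exp (-(F s) / 2) ^ 2 by
        rw [sq, ← Real.exp_add]; ring_nf]
    exact Real.sqrt_sq (Real.exp_pos _).le
  -- split the domain
  have hsplit : Set.Ioc 0 r₀ ∪ Set.Ioi r₀ = Set.Ioi (0:ℝ) := Set.Ioc_union_Ioi_eq_Ioi hr₀.le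
  rw [← hsplit]
  apply MeasureTheory.IntegrableOn.union
  · -- on (0, r₀], dominate by s^(-1/2)
    have hdom : IntegrableOn (fun s : ℝ => s ^ (-(1:ℝ)/2)) (Set.Ioc 0 r₀) volume := by
      have := (intervalIntegral.intervalIntegrable_rpow' (a := 0) (b := r₀)
        (r := -(1:ℝ)/2) (by norm_num)).1
      simpa [Set.uIoc_of_le hr₀.le] using this
    apply hdom.integrable.mono'
    · exact (hgcont.mono Set.Ioc_subset_Ioi_self).aestronglyMeasurable measurableSet_Ioc
    · filter_upwards [ae_restrict_mem measurableSet_Ioc] with s hs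
      have hs0 : 0 < s := hs.1
      have h1 : Real.sqrt (h s) ≤ 1 := by
        rw [hsqrt s, show (1:ℝ) = Real.exp 0 by simp]
        exact Real.exp_le_exp.2 (by nlinarith [hFnn s hs0.le])
      rw [Real.norm_of_nonneg (hgnn s)]
      calc g s ≤ 1 / Real.sqrt s := by
            show Real.sqrt (h s) / Real.sqrt s ≤ 1 / Real.sqrt s
            gcongr
        _ = s ^ (-(1:ℝ)/2) := by
            rw [Real.sqrt_eq_rpow, one_div, ← Real.rpow_neg hs0.le]
            norm_num
  · -- on (r₀, ∞), dominate by C * s ^ (-(a+1)/2)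
    set C : ℝ := Real.exp (a / 2 * Real.log r₀) with hC
    set p : ℝ := -(a + 1) / 2 with hp
    have hplt : p < -1 := by rw [hp]; linarith
    have hdom : IntegrableOn (fun s : ℝ => C * s ^ p) (Set.Ioi r₀) volume :=
      (integrableOn_Ioi_rpow_of_lt hplt hr₀).const_mul C
    apply hdom.integrable.mono'
    · exact (hgcont.mono fun x hx => lt_trans hr₀ hx).aestronglyMeasurable measurableSet_Ioi
    · filter_upwards [ae_restrict_mem measurableSet_Ioi] with s hs
      have hss : r₀ < s := hs
      have hs0 : 0 < s := hr₀.trans hss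
      -- lower bound on F s
      have I2 : IntervalIntegrable (fun u => ξ u / u) volume r₀ s := by
        apply ContinuousOn.intervalIntegrable
        apply hξc.continuousOn.div continuousOn_id
        intro u hu
        rw [Set.uIcc_of_le hss.le] at hu
        exact ne_of_gt (lt_of_lt_of_le hr₀ hu.1)
      have Iconst : IntervalIntegrable (fun u : ℝ => a * (1 / u)) volume r₀ s := by
        apply ContinuousOn.intervalIntegrable
        apply continuousOn_const.mul (continuousOn_const.div continuousOn_id _)
        intro u hu
        rw [Set.uIcc_of_le hss.le] at hu
        exact ne_of_gt (lt_of_lt_of_le hr₀ hu.1)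
      have hadd : F r₀ + ∫ u in r₀..s, ξ u / u = F s :=
        intervalIntegral.integral_add_adjacent_intervals (hint r₀ hr₀) I2
      have hmono' : (∫ u in r₀..s, a * (1 / u)) ≤ ∫ u in r₀..s, ξ u / u := by
        apply intervalIntegral.integral_mono_on hss.le Iconst I2
        intro u hu
        rw [mul_one_div]
        have hu0 : 0 < u := lt_of_lt_of_le hr₀ hu.1
        gcongr
        exact hmono hu.1
      have h0uIcc : (0:ℝ) ∉ Set.uIcc r₀ s := by
        rw [Set.uIcc_of_le hss.le]
        intro h0
        exact absurd h0.1 (not_le.2 hr₀)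
      have hval : (∫ u in r₀..s, a * (1 / u)) = a * (Real.log s - Real.log r₀) := by
        rw [intervalIntegral.integral_const_mul, integral_one_div h0uIcc,
          Real.log_div hs0.ne' hr₀.ne']
      have hFlb : a * (Real.log s - Real.log r₀) ≤ F s := by
        rw [hval] at hmono'
        have h0 := hFnn r₀ hr₀.le
        linarith
      rw [Real.norm_of_nonneg (hgnn s)]
      have h1 : Real.sqrt (h s) ≤ C * s ^ (-(a/2)) := by
        rw [hsqrt s, hC, Real.rpow_def_of_pos hs0, ← Real.exp_add]
        apply Real.exp_le_exp.2
        nlinarith [hFlb]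
      calc g s = Real.sqrt (h s) * s ^ (-(1:ℝ)/2) := by
            show Real.sqrt (h s) / Real.sqrt s = _
            rw [Real.sqrt_eq_rpow s, div_eq_mul_inv, ← Real.rpow_neg hs0.le]
            norm_num
        _ ≤ (C * s ^ (-(a/2))) * s ^ (-(1:ℝ)/2) := by
            gcongr
        _ = C * s ^ p := by
            rw [mul_assoc, ← Real.rpow_add hs0, hp]
            ring_nf
end

section
/- Let ξ, ξ̃ : [0,∞) → ℝ be continuous with ξ(0) = ξ̃(0) = 0. Suppose there is c > 0 with ∫₁ʳ (1 − ξ(s))/s ds ≤ c for all r ≥ 1, and suppose limsup_{r→∞} ξ̃(r) < 1. Define h(r) = exp(-∫₀ʳ ξ/s ds) and h̃(r) = h̃(0)·exp(-∫₀ʳ ξ̃/s ds). Then h(r)/h̃(r) → 0 as r → ∞; consequently there is no α > 0 with h(r) ≥ α·h̃(r) for all r. -/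
/-!
Since `h / h̃ = exp (∫₀ʳ (ξ̃ - ξ) / s ds) / h̃(0)`, it suffices that this exponent tends to `-∞`.
The cigar condition says `∫₁ʳ ξ / s ≥ log r - c`, while `ξ̃ ≤ b < 1` near infinity gives
`∫₁ʳ ξ̃ / s ≤ K + b log r`; so the exponent is at most a constant plus `(b - 1) log r`.
-/

open MeasureTheory intervalIntegral Filter

theorem intervalIntegrable_div_self_of_pos {f : ℝ → ℝ} (hf : Continuous f) {a b : ℝ}
    (ha : 0 < a) (hb : 0 < b) : IntervalIntegrable (fun s => f s / s) volume a b :=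
  (hf.continuousOn.div continuousOn_id fun _ hx =>
    (lt_of_lt_of_le (lt_min ha hb) hx.1).ne').intervalIntegrable

theorem integral_div_self_le_mul_log {f : ℝ → ℝ} (hf : Continuous f) {R r b : ℝ}
    (hR : 0 < R) (hRr : R ≤ r) (hfb : ∀ s ∈ Set.Icc R r, f s ≤ b) :
    ∫ s in R..r, f s / s ≤ b * Real.log (r / R) :=
  calc ∫ s in R..r, f s / s
      ≤ ∫ s in R..r, b / s :=
        integral_mono_on hRr (intervalIntegrable_div_self_of_pos hf hR (hR.trans_le hRr))
          (intervalIntegrable_div_self_of_pos continuous_const hR (hR.trans_le hRr))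
          fun s hs => div_le_div_of_nonneg_right (hfb s hs) (hR.trans_le hs.1).le
    _ = b * Real.log (r / R) := by
        simp only [div_eq_mul_inv b, intervalIntegral.integral_const_mul,
          integral_inv_of_pos hR (hR.trans_le hRr)]

theorem eventually_integral_div_self_le {f : ℝ → ℝ} (hf : Continuous f) {a b : ℝ} (ha : 0 < a)
    (hfb : ∀ᶠ s in atTop, f s ≤ b) :
    ∃ K, ∀ᶠ r in atTop, ∫ s in a..r, f s / s ≤ K + b * Real.log r := by
  obtain ⟨R₀, hR₀⟩ := eventually_atTop.1 hfb
  set R := max R₀ a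
  have hR : 0 < R := ha.trans_le (le_max_right _ _)
  refine ⟨(∫ s in a..R, f s / s) - b * Real.log R, ?_⟩
  filter_upwards [eventually_ge_atTop R] with r hRr
  have hr : 0 < r := hR.trans_le hRr
  have htail := integral_div_self_le_mul_log hf hR hRr fun s hs =>
    hR₀ s ((le_max_left _ _).trans hs.1)
  rw [Real.log_div hr.ne' hR.ne'] at htail
  rw [← integral_add_adjacent_intervals (intervalIntegrable_div_self_of_pos hf ha hR)
    (intervalIntegrable_div_self_of_pos hf hR hr)]
  linarith

theorem log_sub_le_integral_div_self {ξ : ℝ → ℝ} (hξ : Continuous ξ) {c : ℝ}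
    (hcigar : ∀ r : ℝ, 1 ≤ r → (∫ s in (1:ℝ)..r, (1 - ξ s) / s) ≤ c) {r : ℝ} (hr : 1 ≤ r) :
    Real.log r - c ≤ ∫ s in (1:ℝ)..r, ξ s / s := by
  have hr0 : (0:ℝ) < r := one_pos.trans_le hr
  have hsplit : ∫ s in (1:ℝ)..r, ξ s / s
      = (∫ s in (1:ℝ)..r, 1 / s) - ∫ s in (1:ℝ)..r, (1 - ξ s) / s := by
    rw [← integral_sub (f := fun s => 1 / s) (g := fun s => (1 - ξ s) / s)
      (intervalIntegrable_div_self_of_pos continuous_const one_pos hr0)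
      (intervalIntegrable_div_self_of_pos (continuous_const.sub hξ) one_pos hr0)]
    congr 1
    ext s
    ring
  rw [hsplit, integral_one_div_of_pos one_pos hr0, div_one]
  linarith [hcigar r hr]

theorem tendsto_integral_div_self_sub_atBot {ξ ξ' : ℝ → ℝ} (hξ : Continuous ξ)
    (hξ' : Continuous ξ') {c b : ℝ}
    (hcigar : ∀ r : ℝ, 1 ≤ r → (∫ s in (1:ℝ)..r, (1 - ξ s) / s) ≤ c)
    (hb : b < 1) (hξ'b : ∀ᶠ s in atTop, ξ' s ≤ b) :
    Tendsto (fun r => (∫ s in (1:ℝ)..r, ξ' s / s) - ∫ s in (1:ℝ)..r, ξ s / s) atTop atBot := by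
  obtain ⟨K, hK⟩ := eventually_integral_div_self_le hξ' one_pos hξ'b
  have hbound : Tendsto (fun r => (K + c) + (b - 1) * Real.log r) atTop atBot :=
    tendsto_atBot_add_const_left _ _
      (Real.tendsto_log_atTop.const_mul_atTop_of_neg (sub_neg.2 hb))
  refine tendsto_atBot_mono' atTop ?_ hbound
  filter_upwards [hK, eventually_ge_atTop 1] with r hKr hr
  linarith [log_sub_le_integral_div_self hξ hcigar hr]

theorem not_forall_mul_le_of_tendsto_div_zero {f g : ℝ → ℝ} (hg : ∀ r, 0 < g r)
    (hlim : Tendsto (fun r => f r / g r) atTop (nhds 0)) {α : ℝ} (hα : 0 < α) :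
    ¬∀ r : ℝ, 0 ≤ r → α * g r ≤ f r := fun hdom => by
  obtain ⟨r, hsmall, hr⟩ := ((hlim.eventually_lt_const hα).and (eventually_ge_atTop 0)).exists
  exact hsmall.not_ge ((le_div_iff₀ (hg r)).2 (hdom r hr))

theorem stmt_7_general (ξ ξ' : ℝ → ℝ) (hξc : Continuous ξ) (hξ'c : Continuous ξ')
    (hint : ∀ r > (0:ℝ), IntervalIntegrable (fun s => ξ s / s) volume 0 r)
    (hint' : ∀ r > (0:ℝ), IntervalIntegrable (fun s => ξ' s / s) volume 0 r)
    (c : ℝ)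
    (hcigar : ∀ r : ℝ, 1 ≤ r → (∫ s in (1:ℝ)..r, (1 - ξ s) / s) ≤ c)
    (hlimsup : ∃ b : ℝ, b < 1 ∧ ∀ᶠ r in atTop, ξ' r ≤ b)
    (h h' : ℝ → ℝ) (hpos' : 0 < h' 0)
    (hh : ∀ r, h r = Real.exp (-∫ s in (0:ℝ)..r, ξ s / s))
    (hh' : ∀ r, h' r = h' 0 * Real.exp (-∫ s in (0:ℝ)..r, ξ' s / s)) :
    Tendsto (fun r => h r / h' r) atTop (nhds 0) ∧
      ¬∃ α : ℝ, 0 < α ∧ ∀ r : ℝ, 0 ≤ r → α * h' r ≤ h r := by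
  obtain ⟨b, hb, hξ'b⟩ := hlimsup
  have hexponent : Tendsto (fun r => (∫ s in (0:ℝ)..r, ξ' s / s) - ∫ s in (0:ℝ)..r, ξ s / s)
      atTop atBot := by
    refine (tendsto_atBot_add_const_left _
      ((∫ s in (0:ℝ)..1, ξ' s / s) - ∫ s in (0:ℝ)..1, ξ s / s)
      (tendsto_integral_div_self_sub_atBot hξc hξ'c hcigar hb hξ'b)).congr' ?_
    filter_upwards [eventually_gt_atTop 0] with r hr
    rw [← integral_add_adjacent_intervals (hint 1 one_pos)
        (intervalIntegrable_div_self_of_pos hξc one_pos hr),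
      ← integral_add_adjacent_intervals (hint' 1 one_pos)
        (intervalIntegrable_div_self_of_pos hξ'c one_pos hr)]
    ring
  have hratio : ∀ r, h r / h' r
      = Real.exp ((∫ s in (0:ℝ)..r, ξ' s / s) - ∫ s in (0:ℝ)..r, ξ s / s) / h' 0 := by
    intro r
    rw [hh, hh', Real.exp_sub, Real.exp_neg, Real.exp_neg]
    field_simp
  have hlim : Tendsto (fun r => h r / h' r) atTop (nhds 0) := by
    simpa only [hratio, zero_div, Function.comp_def] using
      (Real.tendsto_exp_atBot.comp hexponent).div_const (h' 0)
  exact ⟨hlim, fun ⟨α, hα, hdom⟩ =>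
    not_forall_mul_le_of_tendsto_div_zero (fun r => by rw [hh']; positivity) hlim hα hdom⟩

/-- a cigar-type profile cannot dominate a profile whose generating
function stays bounded away from `1` at infinity. -/
theorem stmt_7 (ξ ξ' : ℝ → ℝ) (hξc : Continuous ξ) (hξ'c : Continuous ξ')
    (hξ0 : ξ 0 = 0) (hξ'0 : ξ' 0 = 0)
    (hint : ∀ r > (0:ℝ), IntervalIntegrable (fun s => ξ s / s) volume 0 r)
    (hint' : ∀ r > (0:ℝ), IntervalIntegrable (fun s => ξ' s / s) volume 0 r)
    (c : ℝ) (hc : 0 < c)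
    (hcigar : ∀ r : ℝ, 1 ≤ r → (∫ s in (1:ℝ)..r, (1 - ξ s) / s) ≤ c)
    (hlimsup : ∃ b : ℝ, b < 1 ∧ ∀ᶠ r in atTop, ξ' r ≤ b)
    (h h' : ℝ → ℝ) (hpos' : 0 < h' 0)
    (hh : ∀ r, h r = Real.exp (-∫ s in (0:ℝ)..r, ξ s / s))
    (hh' : ∀ r, h' r = h' 0 * Real.exp (-∫ s in (0:ℝ)..r, ξ' s / s)) :
    Tendsto (fun r => h r / h' r) atTop (nhds 0) ∧
      ¬∃ α : ℝ, 0 < α ∧ ∀ r : ℝ, 0 ≤ r → α * h' r ≤ h r :=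
  stmt_7_general ξ ξ' hξc hξ'c hint hint' c hcigar hlimsup h h' hpos' hh hh'
end

section
/- Let ξ, ξ̂ : [0,∞) → ℝ be continuous with ξ(0) = ξ̂(0) = 0, 0 ≤ ξ, ξ̂ ≤ 1, ξ̂(r) = 1 for r ≥ 1, and suppose ∫₁^∞ (1 − ξ(s))/s ds = ∞. Set h(r) = exp(-∫₀ʳ ξ/s ds), ĥ(r) = exp(-∫₀ʳ ξ̂/s ds), and ĥ_k(r) = (1/k)ĥ(r/k). Then for every ε > 0 there exists k ≥ 1 such that h(r) ≥ (1/ε)·ĥ_k(r) for all r ≥ 0. -/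
/-!
Write `F r = ∫₀ʳ ξ/s` and `D r = ∫₁ʳ (1 - ξ)/s`. Since `1/s = ξ/s + (1 - ξ)/s`, for `r ≥ 1`
we get `F r = F 1 + log r - D r`, i.e. `h r = e^{D r - F 1} / r`. As `D r → ∞`, eventually
`h r ≥ 1/(ε r)`. For `ξ̂`, which is `1` on `[1, ∞)`, the same identity gives `ĥ x ≤ min 1 (1/x)`,
hence `ĥ_k r ≤ 1 / max r k`. Once `k ≥ R` and `k h(R) ≥ 1/ε`, the bound
`1/(ε max r k) ≤ h r` holds beyond `R` by the tail estimate, and below `R` because `h` decreases.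
-/

open MeasureTheory intervalIntegral Filter Set

section LogarithmicIntegral

variable {f : ℝ → ℝ}

theorem integral_div_self_eq_log_sub {r : ℝ}
    (hf : IntervalIntegrable (fun s => f s / s) volume 0 r) (hr : 1 ≤ r) :
    ∫ s in (0:ℝ)..r, f s / s
      = (∫ s in (0:ℝ)..1, f s / s) + Real.log r - ∫ s in (1:ℝ)..r, (1 - f s) / s := by
  have hr0 : 0 < r := zero_lt_one.trans_le hr
  have hf01 : IntervalIntegrable (fun s => f s / s) volume 0 1 :=
    hf.mono_set (uIcc_subset_uIcc left_mem_uIcc (mem_uIcc.2 (Or.inl ⟨zero_le_one, hr⟩)))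
  have hf1r : IntervalIntegrable (fun s => f s / s) volume 1 r := hf01.symm.trans hf
  have hinv : IntervalIntegrable (fun s : ℝ => 1 / s) volume 1 r :=
    intervalIntegrable_one_div
      (fun s hs => (zero_lt_one.trans_le (uIcc_of_le hr ▸ hs).1).ne') continuousOn_id
  have hcompl : ∫ s in (1:ℝ)..r, (1 - f s) / s = Real.log r - ∫ s in (1:ℝ)..r, f s / s := by
    simp_rw [sub_div]
    rw [integral_sub hinv hf1r, integral_one_div_of_pos zero_lt_one hr0, div_one]
  rw [← integral_add_adjacent_intervals hf01 hf1r, hcompl]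
  ring

theorem exp_neg_integral_div_self_eq {r : ℝ}
    (hf : IntervalIntegrable (fun s => f s / s) volume 0 r) (hr : 1 ≤ r) :
    Real.exp (-∫ s in (0:ℝ)..r, f s / s)
      = Real.exp ((∫ s in (1:ℝ)..r, (1 - f s) / s) - ∫ s in (0:ℝ)..1, f s / s) / r := by
  rw [integral_div_self_eq_log_sub hf hr, ← Real.exp_log (zero_lt_one.trans_le hr), ← Real.exp_sub,
    Real.exp_log (zero_lt_one.trans_le hr)]
  ring_nf

theorem exp_neg_integral_div_self_le_one (hnn : ∀ s, 0 ≤ f s) {r : ℝ} (hr : 0 ≤ r) :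
    Real.exp (-∫ s in (0:ℝ)..r, f s / s) ≤ 1 :=
  Real.exp_le_one_iff.2 <| neg_nonpos.2 <|
    integral_nonneg hr fun s hs => div_nonneg (hnn s) hs.1

theorem exp_neg_integral_div_self_le_one_div (hnn : ∀ s, 0 ≤ f s) (hone : ∀ s, 1 ≤ s → f s = 1)
    {r : ℝ} (hf : IntervalIntegrable (fun s => f s / s) volume 0 r) (hr : 1 ≤ r) :
    Real.exp (-∫ s in (0:ℝ)..r, f s / s) ≤ 1 / r := by
  have htail : ∫ s in (1:ℝ)..r, (1 - f s) / s = 0 := by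
    refine (integral_congr fun s hs => ?_).trans integral_zero
    simp [hone s (uIcc_of_le hr ▸ hs).1]
  rw [exp_neg_integral_div_self_eq hf hr, htail, zero_sub]
  gcongr
  exact exp_neg_integral_div_self_le_one hnn zero_le_one

theorem antitoneOn_exp_neg_integral_div_self
    (hf : ∀ r > (0:ℝ), IntervalIntegrable (fun s => f s / s) volume 0 r) (hnn : ∀ s, 0 ≤ f s) :
    AntitoneOn (fun r => Real.exp (-∫ s in (0:ℝ)..r, f s / s)) (Ici 0) := by
  intro a ha b hb hab
  have hfb : IntervalIntegrable (fun s => f s / s) volume 0 b := by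
    rcases (mem_Ici.1 hb).eq_or_lt with rfl | hb
    · exact .refl
    · exact hf b hb
  refine Real.exp_le_exp.2 (neg_le_neg (integral_mono_interval le_rfl ha hab ?_ hfb))
  exact ae_restrict_of_forall_mem measurableSet_Ioc fun s hs => div_nonneg (hnn s) hs.1.le

theorem eventually_div_le_exp_neg_integral_div_self
    (hf : ∀ r > (0:ℝ), IntervalIntegrable (fun s => f s / s) volume 0 r)
    (hdiv : Tendsto (fun r => ∫ s in (1:ℝ)..r, (1 - f s) / s) atTop atTop) (C : ℝ) :
    ∀ᶠ r in atTop, C / r ≤ Real.exp (-∫ s in (0:ℝ)..r, f s / s) := by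
  have hexp : Tendsto (fun r => Real.exp ((∫ s in (1:ℝ)..r, (1 - f s) / s)
      - ∫ s in (0:ℝ)..1, f s / s)) atTop atTop :=
    Real.tendsto_exp_atTop.comp (tendsto_atTop_add_const_right _ _ hdiv)
  filter_upwards [hexp.eventually_ge_atTop C, eventually_ge_atTop 1] with r hC hr
  rw [exp_neg_integral_div_self_eq (hf r (zero_lt_one.trans_le hr)) hr]
  gcongr

end LogarithmicIntegral

section Rescaling

variable {g : ℝ → ℝ}

theorem one_div_mul_rescale_le_one_div_max (hg_le_one : ∀ x, 0 ≤ x → g x ≤ 1)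
    (hg_le_inv : ∀ x, 1 ≤ x → g x ≤ 1 / x) {k r : ℝ} (hk : 0 < k) (hr : 0 ≤ r) :
    1 / k * g (r / k) ≤ 1 / max r k := by
  rcases le_total r k with hrk | hkr
  · rw [max_eq_right hrk]
    calc 1 / k * g (r / k) ≤ 1 / k * 1 := by gcongr; exact hg_le_one _ (by positivity)
      _ = 1 / k := mul_one _
  · rw [max_eq_left hkr]
    calc 1 / k * g (r / k) ≤ 1 / k * (1 / (r / k)) := by
          gcongr; exact hg_le_inv _ ((one_le_div hk).2 hkr)
      _ = 1 / r := by field_simp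

theorem exists_one_le_forall_mul_rescale_le {h : ℝ → ℝ} {C : ℝ} (hC : 0 ≤ C)
    (hpos : ∀ r, 0 < h r) (hanti : AntitoneOn h (Ici 0))
    (hg_le_one : ∀ x, 0 ≤ x → g x ≤ 1) (hg_le_inv : ∀ x, 1 ≤ x → g x ≤ 1 / x)
    (hlow : ∀ᶠ r in atTop, C / r ≤ h r) :
    ∃ k, 1 ≤ k ∧ ∀ r, 0 ≤ r → C * (1 / k * g (r / k)) ≤ h r := by
  obtain ⟨R, hR⟩ := eventually_atTop.1 (hlow.and (eventually_ge_atTop 1))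
  have hR1 : 1 ≤ R := (hR R le_rfl).2
  set k := max 1 (max R (C / h R))
  have hk1 : 1 ≤ k := le_max_left _ _
  have hk : 0 < k := zero_lt_one.trans_le hk1
  refine ⟨k, hk1, fun r hr => ?_⟩
  calc C * (1 / k * g (r / k)) ≤ C * (1 / max r k) := by
        gcongr; exact one_div_mul_rescale_le_one_div_max hg_le_one hg_le_inv hk hr
    _ = C / max r k := mul_one_div C _
    _ ≤ h r := by
        rcases le_total r R with hrR | hRr
        · calc C / max r k ≤ C / k := div_le_div_of_nonneg_left hC hk (le_max_right _ _)
            _ ≤ h R := by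
                rw [div_le_iff₀ hk, mul_comm]
                exact (div_le_iff₀ (hpos R)).1 ((le_max_right _ _).trans (le_max_right _ _))
            _ ≤ h r := hanti hr (zero_le_one.trans hR1) hrR
        · calc C / max r k ≤ C / r :=
                div_le_div_of_nonneg_left hC (by linarith) (le_max_left _ _)
            _ ≤ h r := (hR r hRr).1

end Rescaling

theorem stmt_14_general (ξ ξ' : ℝ → ℝ)
    (hξ01 : ∀ r, 0 ≤ ξ r ∧ ξ r ≤ 1) (hξ'01 : ∀ r, 0 ≤ ξ' r ∧ ξ' r ≤ 1)
    (hξ'1 : ∀ r : ℝ, 1 ≤ r → ξ' r = 1)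
    (hint : ∀ r > (0:ℝ), IntervalIntegrable (fun s => ξ s / s) volume 0 r)
    (hint' : ∀ r > (0:ℝ), IntervalIntegrable (fun s => ξ' s / s) volume 0 r)
    (hdiv : Tendsto (fun r => ∫ s in (1:ℝ)..r, (1 - ξ s) / s) atTop atTop)
    (h h' : ℝ → ℝ)
    (hh : ∀ r, h r = Real.exp (-∫ s in (0:ℝ)..r, ξ s / s))
    (hh' : ∀ r, h' r = Real.exp (-∫ s in (0:ℝ)..r, ξ' s / s)) :
    ∀ ε > (0:ℝ), ∃ k : ℝ, 1 ≤ k ∧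
      ∀ r : ℝ, 0 ≤ r → (1 / ε) * ((1 / k) * h' (r / k)) ≤ h r := by
  intro ε hε
  obtain rfl : h = _ := funext hh
  obtain rfl : h' = _ := funext hh'
  have hξ'nn : ∀ s, 0 ≤ ξ' s := fun s => (hξ'01 s).1
  exact exists_one_le_forall_mul_rescale_le (one_div_nonneg.2 hε.le) (fun r => Real.exp_pos _)
    (antitoneOn_exp_neg_integral_div_self hint fun s => (hξ01 s).1)
    (fun x hx => exp_neg_integral_div_self_le_one hξ'nn hx)
    (fun x hx => exp_neg_integral_div_self_le_one_div hξ'nn hξ'1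
      (hint' x (zero_lt_one.trans_le hx)) hx)
    (eventually_div_le_exp_neg_integral_div_self hint hdiv _)

/-- under the divergence condition of (c2), `h` dominates `(1/ε)·ĥ_k`
for a suitable rescaling `ĥ_k`. -/
theorem stmt_14 (ξ ξ' : ℝ → ℝ) (hξc : Continuous ξ) (hξ'c : Continuous ξ')
    (hξ0 : ξ 0 = 0) (hξ'0 : ξ' 0 = 0)
    (hξ01 : ∀ r, 0 ≤ ξ r ∧ ξ r ≤ 1) (hξ'01 : ∀ r, 0 ≤ ξ' r ∧ ξ' r ≤ 1)
    (hξ'1 : ∀ r : ℝ, 1 ≤ r → ξ' r = 1)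
    (hint : ∀ r > (0:ℝ), IntervalIntegrable (fun s => ξ s / s) volume 0 r)
    (hint' : ∀ r > (0:ℝ), IntervalIntegrable (fun s => ξ' s / s) volume 0 r)
    (hdiv : Tendsto (fun r => ∫ s in (1:ℝ)..r, (1 - ξ s) / s) atTop atTop)
    (h h' : ℝ → ℝ)
    (hh : ∀ r, h r = Real.exp (-∫ s in (0:ℝ)..r, ξ s / s))
    (hh' : ∀ r, h' r = Real.exp (-∫ s in (0:ℝ)..r, ξ' s / s)) :
    ∀ ε > (0:ℝ), ∃ k : ℝ, 1 ≤ k ∧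
      ∀ r : ℝ, 0 ≤ r → (1 / ε) * ((1 / k) * h' (r / k)) ≤ h r :=
  stmt_14_general ξ ξ' hξ01 hξ'01 hξ'1 hint hint' hdiv h h' hh hh'
end
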